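/- The set of periods of periodic points of f_α equals {2^k : k ≥ 0}; i.e., f_α is a map of type 2^∞, and every periodic point of period 2^k lies in X_k \ X_{k+1}. -/

import Mathlib

noncomputable def kfin (α : ℝ) {k : ℕ} (u : Fin k → Bool) : ℝ :=
  (1 - α) * ∑ i : Fin k, (if u i then α ^ (i : ℕ) else 0)

noncomputable def fDel (α : ℝ) (x : ℝ) : ℝ :=
  if x = 1 then 0
  else
    let j := sInf {n : ℕ | x < 1 - α ^ n}
    if x ≤ 1 - α ^ (j - 1) + α ^ j then x - 1 + 2 * α ^ (j - 1) - α ^ j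
    else (1 - α + α ^ 2) / (2 * α - 1) * (x - 1) + α ^ (j + 1) * (2 - α) / (2 * α - 1)

def Xk (α : ℝ) (k : ℕ) : Set ℝ :=
  ⋃ u : Fin k → Bool, Set.Icc (kfin α u) (kfin α u + α ^ k)

/-! On `[0, α]` the map `f = fDel α` is the translation by `1 - α`, and
`f (1 - α + α z) = α f z` on `[0, 1]`. Hence `f` swaps `[0, α]` and `[1 - α, 1]`, and `f²` is
conjugate to `f` by each of the contractions `z ↦ α z` and `z ↦ 1 - α + α z`, so a periodic point
outside `(α, 1 - α)` has twice the period of its preimage under the matching contraction. On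
`(α, 1 - α)` the map is affine and expanding around its fixed point, which is therefore the only
periodic point there. Since `X_{k+1}` is the union of the images of `X_k` under the two
contractions, induction on the period gives both claims. -/

open Function Set

namespace Function

variable {X Y : Type*} {f : X → X} {x : X}

lemma minimalPeriod_apply_eq_of_semiconj {g : Y → Y} {h : X → Y} {s : Set X}
    (hf : MapsTo f s s) (hh : InjOn h s) (hconj : ∀ y ∈ s, h (f y) = g (h y)) (hx : x ∈ s) :
    minimalPeriod g (h x) = minimalPeriod f x := by
  have hiter : ∀ n, g^[n] (h x) = h (f^[n] x) := fun n => by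
    induction n with
    | zero => rfl
    | succ n ih => rw [iterate_succ_apply', ih, iterate_succ_apply', hconj _ (hf.iterate n hx)]
  refine minimalPeriod_eq_minimalPeriod_iff.mpr fun n => ?_
  simp only [IsPeriodicPt, IsFixedPt, hiter]
  exact hh.eq_iff (hf.iterate n hx) hx

lemma even_minimalPeriod_of_mapsTo_swap {s t : Set X} (hst : MapsTo f s t) (hts : MapsTo f t s)
    (hdisj : Disjoint s t) (hx : x ∈ s) : Even (minimalPeriod f x) := by
  have horbit : ∀ n, f^[2 * n] x ∈ s ∧ f^[2 * n + 1] x ∈ t := fun n => by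
    induction n with
    | zero => exact ⟨hx, hst hx⟩
    | succ n ih =>
      have hs : f^[2 * (n + 1)] x ∈ s := by
        rw [show 2 * (n + 1) = 2 * n + 1 + 1 by ring, iterate_succ_apply']
        exact hts ih.2
      exact ⟨hs, by rw [iterate_succ_apply']; exact hst hs⟩
  obtain ⟨m, hm⟩ | ⟨m, hm⟩ := Nat.even_or_odd (minimalPeriod f x)
  · exact ⟨m, hm⟩
  · have hxt := (horbit m).2
    rw [← hm, iterate_minimalPeriod] at hxt
    exact absurd hxt (hdisj.notMem_of_mem_left hx)

lemma minimalPeriod_eq_two_mul_of_even (heven : Even (minimalPeriod f x)) :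
    minimalPeriod f x = 2 * minimalPeriod f^[2] x := by
  rw [minimalPeriod_iterate_eq_div_gcd two_ne_zero, Nat.gcd_eq_right (even_iff_two_dvd.mp heven),
    Nat.mul_div_cancel' (even_iff_two_dvd.mp heven)]

lemma IsPeriodicPt.mem_of_iterate_mem {s : Set X} (hs : MapsTo f s s) {n i : ℕ}
    (hx : IsPeriodicPt f n x) (hn : 0 < n) (hi : f^[i] x ∈ s) : x ∈ s := by
  have hle : i ≤ i * n := Nat.le_mul_of_pos_right i hn
  rw [← (hx.const_mul i).eq, ← Nat.sub_add_cancel hle, iterate_add_apply]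
  exact hs.iterate _ hi

lemma IsPeriodicPt.eq_of_affine_expanding {𝕜 : Type*} [NormedField 𝕜] {f : 𝕜 → 𝕜} {x p c : 𝕜}
    {s : Set 𝕜} {n : ℕ} (hs : ∀ y ∈ s, f y - p = c * (y - p)) (hc : 1 < ‖c‖)
    (horbit : ∀ i, f^[i] x ∈ s) (hx : IsPeriodicPt f n x) (hn : 0 < n) : x = p := by
  have hiter : ∀ i, f^[i] x - p = c ^ i * (x - p) := fun i => by
    induction i with
    | zero => simp
    | succ i ih => rw [iterate_succ_apply', hs _ (horbit i), ih, pow_succ']; ring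
  have hcn : c ^ n ≠ 1 := fun h => by
    have := one_lt_pow₀ hc hn.ne'
    rw [← norm_pow, h, norm_one] at this
    exact lt_irrefl 1 this
  have hfix := hiter n
  rw [hx.eq] at hfix
  have h0 : (c ^ n - 1) * (x - p) = 0 := by linear_combination -hfix
  exact sub_eq_zero.mp ((mul_eq_zero.mp h0).resolve_left (sub_ne_zero.mpr hcn))

end Function

lemma image_mul_Icc_zero_one {α : ℝ} (hα0 : 0 < α) : (α * ·) '' Icc 0 1 = Icc 0 α := by
  rw [image_mul_left_Icc' hα0, mul_zero, mul_one]

lemma image_one_sub_add_mul_Icc_zero_one {α : ℝ} (hα0 : 0 < α) :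
    (1 - α + α * ·) '' Icc 0 1 = Icc (1 - α) 1 := by
  rw [show (1 - α + α * ·) = (1 - α + ·) ∘ (α * ·) from rfl, image_comp, image_mul_Icc_zero_one hα0,
    image_const_add_Icc, add_zero, sub_add_cancel]

lemma kfin_cons (α : ℝ) {k : ℕ} (b : Bool) (u : Fin k → Bool) :
    kfin α (Fin.cons b u) = (if b then 1 - α else 0) + α * kfin α u := by
  simp only [kfin, Fin.sum_univ_succ, Fin.cons_zero, Fin.cons_succ, Fin.val_succ, Fin.val_zero,
    pow_zero, pow_succ, mul_add, Finset.mul_sum]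
  congr 1
  · split <;> ring
  · refine Finset.sum_congr rfl fun i _ => ?_
    split <;> ring

lemma Xk_zero (α : ℝ) : Xk α 0 = Icc 0 1 := by
  simp [Xk, kfin, iUnion_const]

lemma Xk_succ {α : ℝ} (hα0 : 0 < α) (k : ℕ) :
    Xk α (k + 1) = (α * ·) '' Xk α k ∪ (1 - α + α * ·) '' Xk α k := by
  have hcons : Surjective fun p : Bool × (Fin k → Bool) =>
      (Fin.cons p.1 p.2 : Fin (k + 1) → Bool) :=
    (Fin.consEquiv fun _ => Bool).surjective
  rw [Xk, ← hcons.iUnion_comp, iUnion_prod', union_comm, union_eq_iUnion, Xk, image_iUnion,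
    image_iUnion]
  refine iUnion_congr fun b => ?_
  cases b <;> refine iUnion_congr fun u => ?_
  · rw [kfin_cons, image_mul_left_Icc' hα0]
    congr 1 <;> simp only [Bool.false_eq_true, ↓reduceIte] <;> ring
  · rw [kfin_cons, if_pos rfl, show (1 - α + α * ·) = (1 - α + ·) ∘ (α * ·) from rfl, image_comp,
      image_mul_left_Icc' hα0, image_const_add_Icc]
    congr 1; ring

lemma Xk_subset_Icc {α : ℝ} (hα0 : 0 < α) (hα1 : α ≤ 1) (k : ℕ) : Xk α k ⊆ Icc 0 1 := by
  induction k with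
  | zero => rw [Xk_zero]
  | succ k ih =>
    rw [Xk_succ hα0]
    rintro _ (⟨y, hy, rfl⟩ | ⟨y, hy, rfl⟩) <;> obtain ⟨hy0, hy1⟩ := ih hy <;>
      constructor <;> nlinarith

lemma mul_mem_Xk_succ_iff {α : ℝ} (hα0 : 0 < α) (hα2 : α < 1 / 2) {k : ℕ} {z : ℝ} (hz : z ≤ 1) :
    α * z ∈ Xk α (k + 1) ↔ z ∈ Xk α k := by
  refine ⟨fun h => ?_, fun h => Xk_succ hα0 k ▸ Or.inl ⟨z, h, rfl⟩⟩
  rw [Xk_succ hα0] at h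
  obtain ⟨y, hy, hyz⟩ | ⟨y, hy, hyz⟩ := h
  · rwa [← mul_left_cancel₀ hα0.ne' hyz]
  · nlinarith [(Xk_subset_Icc hα0 (by linarith) k hy).1]

lemma one_sub_add_mul_mem_Xk_succ_iff {α : ℝ} (hα0 : 0 < α) (hα2 : α < 1 / 2) {k : ℕ} {z : ℝ}
    (hz : 0 ≤ z) : 1 - α + α * z ∈ Xk α (k + 1) ↔ z ∈ Xk α k := by
  refine ⟨fun h => ?_, fun h => Xk_succ hα0 k ▸ Or.inr ⟨z, h, rfl⟩⟩
  rw [Xk_succ hα0] at h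
  obtain ⟨y, hy, hyz⟩ | ⟨y, hy, hyz⟩ := h
  · nlinarith [(Xk_subset_Icc hα0 (by linarith) k hy).2]
  · rwa [← mul_left_cancel₀ hα0.ne' (add_left_cancel hyz)]

lemma Xk_one {α : ℝ} (hα0 : 0 < α) : Xk α 1 = Icc 0 α ∪ Icc (1 - α) 1 := by
  rw [Xk_succ hα0, Xk_zero, image_mul_Icc_zero_one hα0, image_one_sub_add_mul_Icc_zero_one hα0]

lemma not_mem_Xk_one {α : ℝ} (hα0 : 0 < α) {x : ℝ} (hx : x ∈ Ioo α (1 - α)) : x ∉ Xk α 1 := by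
  rw [Xk_one hα0]
  rintro (h | h)
  · linarith [hx.1, h.2]
  · linarith [hx.2, h.1]

lemma fDel_one (α : ℝ) : fDel α 1 = 0 := if_pos rfl

lemma fDel_eq_of_mem_Ico {α : ℝ} (hα0 : 0 < α) (hα1 : α < 1) {x : ℝ} {i : ℕ}
    (hx : x ∈ Ico (1 - α ^ i) (1 - α ^ (i + 1))) :
    fDel α x = if x ≤ 1 - α ^ i + α ^ (i + 1) then x - 1 + 2 * α ^ i - α ^ (i + 1)
      else (1 - α + α ^ 2) / (2 * α - 1) * (x - 1) + α ^ (i + 2) * (2 - α) / (2 * α - 1) := by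
  have hx1 : x ≠ 1 := by nlinarith [hx.2, pow_pos hα0 (i + 1)]
  have hj : sInf {n : ℕ | x < 1 - α ^ n} = i + 1 := by
    refine le_antisymm (Nat.sInf_le hx.2) (le_csInf ⟨i + 1, hx.2⟩ fun n hn => ?_)
    by_contra! hni
    have : α ^ i ≤ α ^ n := pow_le_pow_of_le_one hα0.le hα1.le (Nat.lt_succ_iff.mp hni)
    linarith [hx.1, show x < 1 - α ^ n from hn]
  simp only [fDel, if_neg hx1, hj, Nat.add_sub_cancel]

lemma exists_mem_Ico_one_sub_pow {α : ℝ} (hα1 : α < 1) {x : ℝ} (hx : x ∈ Ico 0 1) :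
    ∃ i : ℕ, x ∈ Ico (1 - α ^ i) (1 - α ^ (i + 1)) := by
  have hex : ∃ n : ℕ, x < 1 - α ^ n := by
    obtain ⟨n, hn⟩ := exists_pow_lt_of_lt_one (sub_pos.mpr hx.2) hα1
    exact ⟨n, by linarith⟩
  have hpos : Nat.find hex ≠ 0 := fun h => by
    have := Nat.find_spec hex
    rw [h, pow_zero] at this
    linarith [hx.1]
  obtain ⟨i, hi⟩ := Nat.exists_eq_succ_of_ne_zero hpos
  refine ⟨i, not_lt.mp (Nat.find_min hex (by omega)), ?_⟩
  simpa only [hi] using Nat.find_spec hex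

lemma fDel_eq_of_mem_Ico_zero {α : ℝ} (hα0 : 0 < α) (hα1 : α < 1) {x : ℝ}
    (hx : x ∈ Ico 0 (1 - α)) :
    fDel α x = if x ≤ α then 1 - α + x
      else (1 - α + α ^ 2) / (2 * α - 1) * (x - 1) + α ^ 2 * (2 - α) / (2 * α - 1) := by
  rw [fDel_eq_of_mem_Ico hα0 hα1 (i := 0) (by simpa using hx)]
  simp only [pow_zero, zero_add, pow_one, sub_self]
  split_ifs <;> ring

lemma fDel_eq_one_sub_add_of_mem_Icc {α : ℝ} (hα0 : 0 < α) (hα2 : α < 1 / 2) {x : ℝ}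
    (hx : x ∈ Icc 0 α) : fDel α x = 1 - α + x := by
  rw [fDel_eq_of_mem_Ico_zero hα0 (by linarith) ⟨hx.1, by linarith [hx.2]⟩, if_pos hx.2]

lemma fDel_one_sub_add_mul {α : ℝ} (hα0 : 0 < α) (hα1 : α < 1) {z : ℝ} (hz : z ∈ Icc 0 1) :
    fDel α (1 - α + α * z) = α * fDel α z := by
  obtain rfl | hz1 := hz.2.eq_or_lt
  · rw [mul_one, sub_add_cancel, fDel_one, mul_zero]
  obtain ⟨i, hzi⟩ := exists_mem_Ico_one_sub_pow hα1 ⟨hz.1, hz1⟩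
  have hpow : ∀ n : ℕ, 1 - α ^ (n + 1) = 1 - α + α * (1 - α ^ n) := fun n => by ring
  have hband : 1 - α + α * z ∈ Ico (1 - α ^ (i + 1)) (1 - α ^ (i + 1 + 1)) := by
    rw [hpow, hpow (i + 1)]
    exact ⟨by nlinarith [hzi.1], by nlinarith [hzi.2]⟩
  have hcond : 1 - α + α * z ≤ 1 - α ^ (i + 1) + α ^ (i + 1 + 1) ↔
      z ≤ 1 - α ^ i + α ^ (i + 1) := by
    rw [show 1 - α ^ (i + 1) + α ^ (i + 1 + 1) = 1 - α + α * (1 - α ^ i + α ^ (i + 1)) by ring,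
      add_le_add_iff_left, mul_le_mul_iff_right₀ hα0]
  rw [fDel_eq_of_mem_Ico hα0 hα1 hband, fDel_eq_of_mem_Ico hα0 hα1 hzi]
  simp only [hcond]
  split_ifs <;> ring

lemma mapsTo_fDel_Icc {α : ℝ} (hα0 : 0 < α) (hα2 : α < 1 / 2) :
    MapsTo (fDel α) (Icc 0 1) (Icc 0 1) := by
  have hα1 : α < 1 := by linarith
  intro x hx
  obtain rfl | hx1 := hx.2.eq_or_lt
  · rw [fDel_one]
    exact ⟨le_rfl, zero_le_one⟩
  obtain ⟨i, hxi, hxi'⟩ := exists_mem_Ico_one_sub_pow hα1 ⟨hx.1, hx1⟩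
  have hpi : 0 < α ^ i := pow_pos hα0 i
  have hpi1 : α ^ i ≤ 1 := pow_le_one₀ hα0.le hα1.le
  have hsucc : α ^ (i + 1) = α * α ^ i := pow_succ' α i
  rw [fDel_eq_of_mem_Ico hα0 hα1 ⟨hxi, hxi'⟩]
  split_ifs with hc
  · constructor <;> nlinarith
  · have hneg : 2 * α - 1 < 0 := by linarith
    have hq : 0 < 1 - α + α ^ 2 := by nlinarith
    have hsucc2 : α ^ (i + 2) = α ^ 2 * α ^ i := by ring
    rw [div_mul_eq_mul_div, ← add_div]
    constructor
    · refine div_nonneg_of_nonpos ?_ hneg.le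
      nlinarith [mul_lt_mul_of_pos_left (show x - 1 < -(α * α ^ i) by linarith) hq,
        mul_nonneg (mul_nonneg hα0.le hpi.le) (mul_nonneg (by linarith : 0 ≤ 1 - α)
          (by linarith : 0 ≤ 1 - 2 * α))]
    · rw [div_le_one_of_neg hneg]
      nlinarith [mul_lt_mul_of_pos_left (show -α ^ i + α * α ^ i < x - 1 by linarith) hq,
        mul_nonneg_of_nonpos_of_nonpos (by linarith : α ^ i - 1 ≤ 0) hneg.le]

-- The slope and the fixed point of the affine branch of `fDel α` on `(α, 1 - α)`.
noncomputable def fDelFixedPt (α : ℝ) : ℝ := (1 - α ^ 2) / (2 - α)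

noncomputable def fDelSlope (α : ℝ) : ℝ := (1 - α + α ^ 2) / (2 * α - 1)

lemma fDelFixedPt_mem_Ioo {α : ℝ} (hα0 : 0 < α) (hα2 : α < 1 / 2) :
    fDelFixedPt α ∈ Ioo α (1 - α) := by
  have h : 0 < 2 - α := by linarith
  rw [fDelFixedPt]
  exact ⟨by rw [lt_div_iff₀ h]; nlinarith, by rw [div_lt_iff₀ h]; nlinarith⟩

lemma fDel_sub_fDelFixedPt {α : ℝ} (hα0 : 0 < α) (hα2 : α < 1 / 2) {x : ℝ}
    (hx : x ∈ Ioo α (1 - α)) :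
    fDel α x - fDelFixedPt α = fDelSlope α * (x - fDelFixedPt α) := by
  rw [fDel_eq_of_mem_Ico_zero hα0 (by linarith) ⟨by linarith [hx.1], hx.2⟩, if_neg hx.1.not_ge]
  have hfix : (1 - α + α ^ 2) / (2 * α - 1) * (fDelFixedPt α - 1)
      + α ^ 2 * (2 - α) / (2 * α - 1) = fDelFixedPt α := by
    have h2 : 2 - α ≠ 0 := (by linarith : 0 < 2 - α).ne'
    rw [fDelFixedPt]
    field_simp
    rw [div_eq_iff (by linarith : α * 2 - 1 < 0).ne]
    ring
  rw [fDelSlope]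
  linear_combination hfix

lemma one_lt_norm_fDelSlope {α : ℝ} (hα0 : 0 < α) (hα2 : α < 1 / 2) : 1 < ‖fDelSlope α‖ := by
  rw [fDelSlope, Real.norm_eq_abs, abs_div, abs_of_pos (by nlinarith), abs_of_neg (by linarith),
    one_lt_div (by linarith)]
  nlinarith

lemma isFixedPt_fDel_fDelFixedPt {α : ℝ} (hα0 : 0 < α) (hα2 : α < 1 / 2) :
    IsFixedPt (fDel α) (fDelFixedPt α) := by
  have h := fDel_sub_fDelFixedPt hα0 hα2 (fDelFixedPt_mem_Ioo hα0 hα2)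
  rwa [sub_self, mul_zero, sub_eq_zero] at h

lemma mapsTo_fDel_Icc_zero {α : ℝ} (hα0 : 0 < α) (hα2 : α < 1 / 2) :
    MapsTo (fDel α) (Icc 0 α) (Icc (1 - α) 1) := fun x hx => by
  rw [fDel_eq_one_sub_add_of_mem_Icc hα0 hα2 hx]
  exact ⟨by linarith [hx.1], by linarith [hx.2]⟩

lemma mapsTo_fDel_Icc_one_sub {α : ℝ} (hα0 : 0 < α) (hα2 : α < 1 / 2) :
    MapsTo (fDel α) (Icc (1 - α) 1) (Icc 0 α) := by
  rw [← image_one_sub_add_mul_Icc_zero_one hα0, ← image_mul_Icc_zero_one hα0]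
  rintro _ ⟨z, hz, rfl⟩
  rw [fDel_one_sub_add_mul hα0 (by linarith) hz]
  exact mem_image_of_mem _ (mapsTo_fDel_Icc hα0 hα2 hz)

lemma disjoint_Icc_zero_Icc_one_sub {α : ℝ} (hα2 : α < 1 / 2) :
    Disjoint (Icc 0 α) (Icc (1 - α) 1) :=
  disjoint_left.mpr fun _ h1 h2 => by linarith [h1.2, h2.1]

lemma mapsTo_fDel_Xk_one {α : ℝ} (hα0 : 0 < α) (hα2 : α < 1 / 2) :
    MapsTo (fDel α) (Xk α 1) (Xk α 1) := by
  have h := (mapsTo_fDel_Icc_zero hα0 hα2).union_union (mapsTo_fDel_Icc_one_sub hα0 hα2)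
  rwa [union_comm (Icc (1 - α) 1), ← Xk_one hα0] at h

lemma minimalPeriod_fDel_mul {α : ℝ} (hα0 : 0 < α) (hα2 : α < 1 / 2) {z : ℝ}
    (hz : z ∈ Icc 0 1) : minimalPeriod (fDel α) (α * z) = 2 * minimalPeriod (fDel α) z := by
  have hαz : α * z ∈ Icc 0 α := (image_mul_Icc_zero_one hα0).subset ⟨z, hz, rfl⟩
  have hconj : ∀ y ∈ Icc (0 : ℝ) 1, α * fDel α y = (fDel α)^[2] (α * y) := fun y hy => by
    rw [iterate_succ_apply', iterate_one,
      fDel_eq_one_sub_add_of_mem_Icc hα0 hα2 ((image_mul_Icc_zero_one hα0).subset ⟨y, hy, rfl⟩),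
      fDel_one_sub_add_mul hα0 (by linarith) hy]
  rw [minimalPeriod_eq_two_mul_of_even (even_minimalPeriod_of_mapsTo_swap
      (mapsTo_fDel_Icc_zero hα0 hα2) (mapsTo_fDel_Icc_one_sub hα0 hα2)
      (disjoint_Icc_zero_Icc_one_sub hα2) hαz),
    minimalPeriod_apply_eq_of_semiconj (mapsTo_fDel_Icc hα0 hα2)
      (fun _ _ _ _ h => mul_left_cancel₀ hα0.ne' h) hconj hz]

lemma minimalPeriod_fDel_one_sub_add_mul {α : ℝ} (hα0 : 0 < α) (hα2 : α < 1 / 2) {z : ℝ}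
    (hz : z ∈ Icc 0 1) :
    minimalPeriod (fDel α) (1 - α + α * z) = 2 * minimalPeriod (fDel α) z := by
  have hαz : 1 - α + α * z ∈ Icc (1 - α) 1 :=
    (image_one_sub_add_mul_Icc_zero_one hα0).subset ⟨z, hz, rfl⟩
  have hconj : ∀ y ∈ Icc (0 : ℝ) 1,
      1 - α + α * fDel α y = (fDel α)^[2] (1 - α + α * y) := fun y hy => by
    rw [iterate_succ_apply', iterate_one, fDel_one_sub_add_mul hα0 (by linarith) hy,
      fDel_eq_one_sub_add_of_mem_Icc hα0 hα2
        ((image_mul_Icc_zero_one hα0).subset ⟨_, mapsTo_fDel_Icc hα0 hα2 hy, rfl⟩)]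
  rw [minimalPeriod_eq_two_mul_of_even (even_minimalPeriod_of_mapsTo_swap
      (mapsTo_fDel_Icc_one_sub hα0 hα2) (mapsTo_fDel_Icc_zero hα0 hα2)
      (disjoint_Icc_zero_Icc_one_sub hα2).symm hαz),
    minimalPeriod_apply_eq_of_semiconj (mapsTo_fDel_Icc hα0 hα2)
      (fun _ _ _ _ h => mul_left_cancel₀ hα0.ne' (add_left_cancel h)) hconj hz]

lemma eq_fDelFixedPt_of_mem_periodicPts {α : ℝ} (hα0 : 0 < α) (hα2 : α < 1 / 2) {x : ℝ}
    (hx : x ∈ Ioo α (1 - α)) (hper : x ∈ periodicPts (fDel α)) : x = fDelFixedPt α := by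
  obtain ⟨n, hn, hxn : IsPeriodicPt (fDel α) n x⟩ := hper
  refine hxn.eq_of_affine_expanding (fun y hy => fDel_sub_fDelFixedPt hα0 hα2 hy)
    (one_lt_norm_fDelSlope hα0 hα2) (fun i => ?_) hn
  have hxI : x ∈ Icc 0 1 := ⟨by linarith [hx.1], by linarith [hx.2]⟩
  obtain ⟨hi0, hi1⟩ := (mapsTo_fDel_Icc hα0 hα2).iterate i hxI
  by_contra hi
  have hside : (fDel α)^[i] x ∈ Xk α 1 := by
    rw [Xk_one hα0]
    by_cases h : (fDel α)^[i] x ≤ α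
    · exact Or.inl ⟨hi0, h⟩
    · exact Or.inr ⟨not_lt.mp fun h' => hi ⟨not_le.mp h, h'⟩, hi1⟩
  exact not_mem_Xk_one hα0 hx (hxn.mem_of_iterate_mem (mapsTo_fDel_Xk_one hα0 hα2) hn hside)

lemma pow_mul_fDelFixedPt_mem_Icc {α : ℝ} (hα0 : 0 < α) (hα2 : α < 1 / 2) (k : ℕ) :
    α ^ k * fDelFixedPt α ∈ Icc 0 1 := by
  obtain ⟨hp0, hp1⟩ := fDelFixedPt_mem_Ioo hα0 hα2
  exact ⟨mul_nonneg (by positivity) (by linarith),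
    mul_le_one₀ (pow_le_one₀ hα0.le (by linarith)) (by linarith) (by linarith)⟩

lemma minimalPeriod_fDel_pow_mul_fDelFixedPt {α : ℝ} (hα0 : 0 < α) (hα2 : α < 1 / 2) (k : ℕ) :
    minimalPeriod (fDel α) (α ^ k * fDelFixedPt α) = 2 ^ k := by
  induction k with
  | zero =>
    rw [pow_zero, one_mul, pow_zero]
    exact minimalPeriod_eq_one_iff_isFixedPt.mpr (isFixedPt_fDel_fDelFixedPt hα0 hα2)
  | succ k ih =>
    rw [pow_succ', mul_assoc,
      minimalPeriod_fDel_mul hα0 hα2 (pow_mul_fDelFixedPt_mem_Icc hα0 hα2 k), ih, pow_succ']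

lemma exists_minimalPeriod_fDel_eq_two_pow {α : ℝ} (hα0 : 0 < α) (hα2 : α < 1 / 2) (n : ℕ) :
    ∀ x ∈ Icc (0 : ℝ) 1, minimalPeriod (fDel α) x = n → 0 < n →
      ∃ k, n = 2 ^ k ∧ x ∈ Xk α k \ Xk α (k + 1) := by
  induction n using Nat.strong_induction_on with
  | _ n ih =>
  intro x hx hxn hn
  by_cases hleft : x ≤ α
  · obtain ⟨z, hz, rfl⟩ := (image_mul_Icc_zero_one hα0).superset ⟨hx.1, hleft⟩
    rw [minimalPeriod_fDel_mul hα0 hα2 hz] at hxn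
    obtain ⟨k, hk, hzk, hzk'⟩ := ih _ (by omega) z hz rfl (by omega)
    exact ⟨k + 1, by rw [pow_succ]; omega, (mul_mem_Xk_succ_iff hα0 hα2 hz.2).mpr hzk,
      mt (mul_mem_Xk_succ_iff hα0 hα2 hz.2).mp hzk'⟩
  by_cases hright : 1 - α ≤ x
  · obtain ⟨z, hz, rfl⟩ := (image_one_sub_add_mul_Icc_zero_one hα0).superset ⟨hright, hx.2⟩
    rw [minimalPeriod_fDel_one_sub_add_mul hα0 hα2 hz] at hxn
    obtain ⟨k, hk, hzk, hzk'⟩ := ih _ (by omega) z hz rfl (by omega)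
    exact ⟨k + 1, by rw [pow_succ]; omega, (one_sub_add_mul_mem_Xk_succ_iff hα0 hα2 hz.1).mpr hzk,
      mt (one_sub_add_mul_mem_Xk_succ_iff hα0 hα2 hz.1).mp hzk'⟩
  have hmid : x ∈ Ioo α (1 - α) := ⟨not_le.mp hleft, not_le.mp hright⟩
  have hfix := eq_fDelFixedPt_of_mem_periodicPts hα0 hα2 hmid
    (minimalPeriod_pos_iff_mem_periodicPts.mp (hxn ▸ hn))
  rw [hfix, minimalPeriod_eq_one_iff_isFixedPt.mpr (isFixedPt_fDel_fDelFixedPt hα0 hα2)] at hxn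
  exact ⟨0, by rw [← hxn, pow_zero], Xk_zero α ▸ hx, not_mem_Xk_one hα0 hmid⟩

/-- The set of periods of periodic points of `f_α` in `[0,1]` is exactly `{2^k : k ≥ 0}`
(`f_α` is of type `2^∞`), and every periodic point of period `2^k` lies in `X_k \ X_{k+1}`. -/
theorem stmt10 (α : ℝ) (hα1 : 0 < α) (hα2 : α < 1 / 2) :
    ({n : ℕ | 0 < n ∧ ∃ x ∈ Set.Icc (0 : ℝ) 1, Function.minimalPeriod (fDel α) x = n} =
      {n : ℕ | ∃ k : ℕ, n = 2 ^ k}) ∧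
    ∀ x ∈ Set.Icc (0 : ℝ) 1, ∀ k : ℕ,
      Function.minimalPeriod (fDel α) x = 2 ^ k → x ∈ Xk α k \ Xk α (k + 1) := by
  refine ⟨Set.ext fun n => ⟨?_, ?_⟩, fun x hx k hxk => ?_⟩
  · rintro ⟨hn, x, hx, hxn⟩
    obtain ⟨k, hk, -⟩ := exists_minimalPeriod_fDel_eq_two_pow hα1 hα2 n x hx hxn hn
    exact ⟨k, hk⟩
  · rintro ⟨k, rfl⟩
    exact ⟨by positivity, _, pow_mul_fDelFixedPt_mem_Icc hα1 hα2 k,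
      minimalPeriod_fDel_pow_mul_fDelFixedPt hα1 hα2 k⟩
  · obtain ⟨j, hj, hx'⟩ := exists_minimalPeriod_fDel_eq_two_pow hα1 hα2 _ x hx hxk (by positivity)
    rwa [Nat.pow_right_injective le_rfl hj]
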